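/- Right-branch half-period bound: for every η > 1, letting k_max(η) > 1 be the unique number greater than 1 with V(k_max(η)) = η, one has ∫_{1}^{k_max(η)} 2·(η − V(k))^{−1/2} dk > π/√2. -/

import Mathlib

/-!
Since `(V k - 2 (k - 1)²)' = -2 (k - 1)² / k < 0`, on `(1, k_max)` we have
`η - V k < 2 ((k_max - 1)² - (k - 1)²)`, so the integrand strictly dominates
`2 / √(2 ((k_max - 1)² - (k - 1)²))`, an arcsine derivative whose integral is `√2 · π / 2 = π / √2`.
The integrand is integrable because `V` is convex: the chord from `(1, 1)` to `(k_max, η)` lies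
above `V`, so `η - V k ≥ (η - 1) (k_max - k) / (k_max - 1)` and the singularity at `k_max` is
at worst that of `(k_max - k)^(-1/2)`.
-/

open Real

noncomputable def V (k : ℝ) : ℝ := k ^ 2 - 2 * Real.log k

open Set MeasureTheory intervalIntegral

theorem intervalIntegral.integral_lt_integral_of_lt_on_Ioo {f g : ℝ → ℝ} {a b : ℝ} (hab : a < b)
    (hf : IntervalIntegrable f volume a b) (hg : IntervalIntegrable g volume a b)
    (hlt : ∀ x ∈ Ioo a b, f x < g x) : ∫ x in a..b, f x < ∫ x in a..b, g x := by
  rw [← sub_pos, ← integral_sub hg hf]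
  exact intervalIntegral_pos_of_pos_on (hg.sub hf) (fun x hx => sub_pos.2 (hlt x hx)) hab

theorem ConvexOn.mul_sub_le_mul_sub {s : Set ℝ} {f : ℝ → ℝ} (hf : ConvexOn ℝ s f) {x y z : ℝ}
    (hx : x ∈ s) (hz : z ∈ s) (hxy : x < y) (hyz : y < z) :
    (f z - f x) * (z - y) ≤ (f z - f y) * (z - x) := by
  have h := hf.slope_mono_adjacent hx hz hxy hyz
  rw [div_le_div_iff₀ (sub_pos.2 hxy) (sub_pos.2 hyz)] at h
  linear_combination h

theorem hasDerivAt_arcsin_div {b x : ℝ} (hx : x ∈ Ioo (-b) b) :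
    HasDerivAt (fun x => arcsin (x / b)) (√(b ^ 2 - x ^ 2))⁻¹ x := by
  have hb : 0 < b := by linarith [hx.1, hx.2]
  have hxb : |x / b| < 1 := by
    rw [abs_div, abs_of_pos hb, div_lt_one hb, abs_lt]; exact hx
  have h := (hasDerivAt_arcsin (abs_lt.1 hxb).1.ne' (abs_lt.1 hxb).2.ne).comp x
    ((hasDerivAt_id x).div_const b)
  refine h.congr_deriv ?_
  have : 1 - (x / b) ^ 2 = (b ^ 2 - x ^ 2) / b ^ 2 := by field_simp
  rw [this, sqrt_div' _ (sq_nonneg b), sqrt_sq hb.le]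
  field_simp

theorem intervalIntegrable_inv_sqrt_sq_sub_sq {b : ℝ} (hb : 0 ≤ b) :
    IntervalIntegrable (fun x => (√(b ^ 2 - x ^ 2))⁻¹) volume 0 b :=
  (intervalIntegrable_iff_integrableOn_Ioc_of_le hb).2 <|
    integrableOn_deriv_of_nonneg (by fun_prop)
      (fun x hx => hasDerivAt_arcsin_div ⟨by linarith [hx.1], hx.2⟩)
      (fun x _ => by positivity)

theorem integral_inv_sqrt_sq_sub_sq {b : ℝ} (hb : 0 < b) :
    ∫ x in (0 : ℝ)..b, (√(b ^ 2 - x ^ 2))⁻¹ = π / 2 := by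
  rw [integral_eq_sub_of_hasDerivAt_of_le hb.le (by fun_prop)
    (fun x hx => hasDerivAt_arcsin_div ⟨by linarith [hx.1], hx.2⟩)
    (intervalIntegrable_inv_sqrt_sq_sub_sq hb.le)]
  simp [hb.ne']

theorem intervalIntegrable_inv_sqrt_of_mul_sub_le {f : ℝ → ℝ} {a b m : ℝ} (hab : a ≤ b)
    (hm : 0 < m) (hf : Measurable f) (hle : ∀ x ∈ Ioo a b, m * (b - x) ≤ f x) :
    IntervalIntegrable (fun x => (√(f x))⁻¹) volume a b := by
  have hdom : IntervalIntegrable (fun x => (√m)⁻¹ * (b - x) ^ (-(1 / 2) : ℝ)) volume a b := by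
    have h := (intervalIntegrable_rpow' (r := -(1 / 2)) (by norm_num)
      (a := b - a) (b := b - b)).comp_sub_left b
    simp only [sub_sub_cancel] at h
    exact h.const_mul _
  refine hdom.mono_fun' (by fun_prop) ?_
  rw [uIoc_of_le hab]
  refine ae_restrict_of_ae_eq_of_ae_restrict Ioo_ae_eq_Ioc ?_
  rw [ae_restrict_iff' measurableSet_Ioo]
  filter_upwards with x hx
  have hbx : 0 < b - x := sub_pos.2 hx.2
  calc ‖(√(f x))⁻¹‖ = (√(f x))⁻¹ := by rw [norm_of_nonneg (by positivity)]
    _ ≤ (√(m * (b - x)))⁻¹ := inv_anti₀ (by positivity) (sqrt_le_sqrt (hle x hx))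
    _ = (√m)⁻¹ * (b - x) ^ (-(1 / 2) : ℝ) := by
      rw [sqrt_mul hm.le, mul_inv, rpow_neg hbx.le, ← sqrt_eq_rpow]

theorem two_mul_inv_sqrt_two_mul (y : ℝ) : 2 * (√(2 * y))⁻¹ = √2 * (√y)⁻¹ := by
  rw [sqrt_mul zero_le_two, mul_inv, ← mul_assoc, ← div_eq_mul_inv 2, div_sqrt]

theorem intervalIntegrable_two_mul_inv_sqrt_two_mul_sq_sub_sq {c d : ℝ} (hcd : c ≤ d) :
    IntervalIntegrable (fun k => 2 * (√(2 * ((d - c) ^ 2 - (k - c) ^ 2)))⁻¹) volume c d := by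
  have h := (intervalIntegrable_inv_sqrt_sq_sub_sq (sub_nonneg.2 hcd)).comp_sub_right c
  simp only [zero_add, sub_add_cancel] at h
  simpa only [two_mul_inv_sqrt_two_mul] using h.const_mul √2

theorem integral_two_mul_inv_sqrt_two_mul_sq_sub_sq {c d : ℝ} (hcd : c < d) :
    ∫ k in c..d, 2 * (√(2 * ((d - c) ^ 2 - (k - c) ^ 2)))⁻¹ = π / √2 := by
  simp only [two_mul_inv_sqrt_two_mul, intervalIntegral.integral_const_mul]
  rw [integral_comp_sub_right (fun x => (√((d - c) ^ 2 - x ^ 2))⁻¹), sub_self,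
    integral_inv_sqrt_sq_sub_sq (sub_pos.2 hcd)]
  field_simp
  exact sq_sqrt zero_le_two

theorem V_one : V 1 = 1 := by simp [V]

theorem measurable_V : Measurable V := by unfold V; fun_prop

theorem hasDerivAt_V {x : ℝ} (hx : x ≠ 0) : HasDerivAt V (2 * x - 2 / x) x := by
  refine ((hasDerivAt_pow 2 x).sub ((hasDerivAt_log hx).const_mul 2)).congr_deriv ?_
  simp [div_eq_mul_inv]

theorem convexOn_V : ConvexOn ℝ (Ioi 0) V :=
  ((convexOn_pow 2).subset Ioi_subset_Ici_self (convex_Ioi 0)).add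
    (strictConcaveOn_log_Ioi.concaveOn.smul zero_le_two).neg

theorem hasDerivAt_V_sub_two_mul_sq {x : ℝ} (hx : x ≠ 0) :
    HasDerivAt (fun k => V k - 2 * (k - 1) ^ 2) (-2 * (x - 1) ^ 2 / x) x := by
  refine ((hasDerivAt_V hx).sub
    (((hasDerivAt_id' x).sub_const 1).pow 2 |>.const_mul 2)).congr_deriv ?_
  field_simp
  ring

theorem strictAntiOn_V_sub_two_mul_sq :
    StrictAntiOn (fun k => V k - 2 * (k - 1) ^ 2) (Ici 1) := by
  have hne : ∀ x ∈ Ici (1 : ℝ), x ≠ 0 := fun x hx => (zero_lt_one.trans_le hx).ne'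
  refine strictAntiOn_of_hasDerivWithinAt_neg (convex_Ici 1)
    (fun x hx => (hasDerivAt_V_sub_two_mul_sq (hne x hx)).continuousAt.continuousWithinAt)
    (fun x hx => (hasDerivAt_V_sub_two_mul_sq (hne x (interior_subset hx))).hasDerivWithinAt)
    (fun x hx => ?_)
  rw [interior_Ici] at hx
  exact div_neg_of_neg_of_pos (mul_neg_of_neg_of_pos (by norm_num) (pow_pos (sub_pos.2 hx) 2))
    (zero_lt_one.trans hx)

theorem mul_sub_le_sub_V_mul {a k : ℝ} (hk : k ∈ Ioo 1 a) :
    (V a - 1) * (a - k) ≤ (V a - V k) * (a - 1) := by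
  simpa only [V_one] using convexOn_V.mul_sub_le_mul_sub (mem_Ioi.2 one_pos)
    (mem_Ioi.2 (one_pos.trans (hk.1.trans hk.2))) hk.1 hk.2

theorem sub_V_lt_two_mul_sq_sub_sq {a k : ℝ} (hk : k ∈ Ioo 1 a) :
    V a - V k < 2 * ((a - 1) ^ 2 - (k - 1) ^ 2) := by
  have h := strictAntiOn_V_sub_two_mul_sq (mem_Ici.2 hk.1.le) (mem_Ici.2 (hk.1.trans hk.2).le) hk.2
  linarith

theorem stmt_10 (kmax : ℝ → ℝ)
    (hkmax : ∀ η : ℝ, 1 < η → 1 < kmax η ∧ V (kmax η) = η)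
    (η : ℝ) (hη : 1 < η) :
    (∫ k in (1 : ℝ)..(kmax η), 2 * (Real.sqrt (η - V k))⁻¹) >
      π / Real.sqrt 2 := by
  obtain ⟨ha, hVa⟩ := hkmax η hη
  set a := kmax η
  have hm : 0 < (η - 1) / (a - 1) := div_pos (sub_pos.2 hη) (sub_pos.2 ha)
  have hchord : ∀ k ∈ Ioo 1 a, (η - 1) / (a - 1) * (a - k) ≤ η - V k := fun k hk => by
    rw [div_mul_eq_mul_div, div_le_iff₀ (sub_pos.2 ha), ← hVa]
    exact mul_sub_le_sub_V_mul hk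
  have hf : IntervalIntegrable (fun k => 2 * (√(η - V k))⁻¹) volume 1 a :=
    (intervalIntegrable_inv_sqrt_of_mul_sub_le ha.le hm (measurable_const.sub measurable_V)
      hchord).const_mul 2
  have hlt : ∀ k ∈ Ioo 1 a,
      2 * (√(2 * ((a - 1) ^ 2 - (k - 1) ^ 2)))⁻¹ < 2 * (√(η - V k))⁻¹ := fun k hk => by
    have hpos : 0 < η - V k := (mul_pos hm (sub_pos.2 hk.2)).trans_le (hchord k hk)
    gcongr
    rw [← hVa]
    exact sub_V_lt_two_mul_sq_sub_sq hk
  rw [gt_iff_lt, ← integral_two_mul_inv_sqrt_two_mul_sq_sub_sq ha]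
  exact integral_lt_integral_of_lt_on_Ioo ha
    (intervalIntegrable_two_mul_inv_sqrt_two_mul_sq_sub_sq ha.le) hf hlt
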